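/- arXiv:2111.05741 — 5 statements merged into one kernel-verified Lean document; each statement's English description precedes it below -/
import Mathlib

section
/- Let A → B be a flat local homomorphism of Artinian local rings. Then length_B(B) = length_A(A) · length_{B}(B/m_A B), where m_A is the maximal ideal of A. -/
/-- The length of a module, defined as the Krull dimension of its lattice of submodules. -/
noncomputable def moduleLength (R M : Type*) [Ring R] [AddCommGroup M] [Module R M] :
    WithBot ℕ∞ :=
  Order.krullDim (Submodule R M)

theorem stmt4_general (A B : Type*) [CommRing A] [CommRing B]
    [IsLocalRing A] [IsLocalRing B]
    [Algebra A B] [Module.Flat A B] [IsLocalHom (algebraMap A B)] :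
    moduleLength B B =
      moduleLength A A *
        moduleLength B (B ⧸ (Ideal.map (algebraMap A B) (IsLocalRing.maximalIdeal A))) := by
  have h := IsLocalRing.length_baseChange A B A
  rw [(TensorProduct.AlgebraTensorModule.rid A B B).length_eq] at h
  simp only [moduleLength, ← Module.coe_length, h, WithBot.coe_mul]

/-- Let `A → B` be a flat local homomorphism of Artinian local rings.  Then
`length_B B = length_A A * length_B (B ⧸ m_A B)`. -/
theorem stmt4 (A B : Type*) [CommRing A] [CommRing B]
    [IsLocalRing A] [IsLocalRing B] [IsArtinianRing A] [IsArtinianRing B]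
    [Algebra A B] [Module.Flat A B] [IsLocalHom (algebraMap A B)] :
    moduleLength B B =
      moduleLength A A *
        moduleLength B (B ⧸ (Ideal.map (algebraMap A B) (IsLocalRing.maximalIdeal A))) :=
  stmt4_general A B
end

section
/- Let Π be a weighted rational polyhedral complex of dimension d in ℝ^m with integer weights m_σ on its d-dimensional faces, and let φ : |Π| → ℝ be a function that is affine with integral linear part on each face of Π. Let Π′ be the graph of φ in ℝ^m × ℝ, with each d-face σ′ = {(x, φ(x)) : x ∈ σ} given the weight m_σ. Then Π′ is balanced (at every (d−1)-dimensional face) if and only if Π is balanced and the tropical Weil divisor div(φ) is zero. -/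
/-!
The graph complex `Π′` is balanced at `τ` exactly when the weighted sum of its primitive vectors
`(ω_{σ,τ}, ∂φ/∂ω_{σ,τ})` lies in the graph of `φ|_{L_τ}`. Since that sum is the pair
`(Σ m_σ ω_{σ,τ}, Σ m_σ ∂φ/∂ω_{σ,τ})`, this means that its first coordinate lies in `L_τ`
(balancing of `Π`) and that its second coordinate is the value of `φ|_{L_τ}` on the first
(vanishing of `div φ` at `τ`).
-/

theorem Submodule.mk_mem_map_id_prod_iff {R M N : Type*} [Semiring R] [AddCommMonoid M]
    [AddCommMonoid N] [Module R M] [Module R N] (L : Submodule R M) (f : M →ₗ[R] N)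
    (x : M) (y : N) :
    (x, y) ∈ L.map (LinearMap.id.prod f) ↔ x ∈ L ∧ f x = y := by
  constructor
  · rintro ⟨v, hv, hvxy⟩
    obtain ⟨rfl, rfl⟩ := Prod.mk.inj hvxy
    exact ⟨hv, rfl⟩
  · rintro ⟨hx, rfl⟩
    exact ⟨x, hx, rfl⟩

theorem Finset.sum_zsmul_mk {ι M R : Type*} [AddCommGroup M] [Ring R] (s : Finset ι) (c : ι → ℤ)
    (a : ι → M) (b : ι → R) :
    ∑ i ∈ s, c i • (a i, b i) = (∑ i ∈ s, c i • a i, ∑ i ∈ s, (c i : R) * b i) := by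
  simp only [Prod.smul_mk, zsmul_eq_mul, prod_mk_sum]

theorem stmt6_general (m : ℕ) (D T : Type*)
    (adj : T → Finset D) (wt : D → ℤ)
    (w : T → D → (Fin m → ℝ))
    (L : T → Submodule ℝ (Fin m → ℝ))
    (u : D → ((Fin m → ℝ) →ₗ[ℝ] ℝ)) (uτ : T → ((Fin m → ℝ) →ₗ[ℝ] ℝ)) :
    -- balancing of the graph complex `Π′` at every `(d-1)`-face
    (∀ t : T,
        (∑ σ ∈ adj t, wt σ • ((w t σ, u σ (w t σ)) : (Fin m → ℝ) × ℝ)) ∈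
          (L t).map (LinearMap.prod (LinearMap.id) (uτ t))) ↔
      -- balancing of `Π` ...
      ((∀ t : T, (∑ σ ∈ adj t, wt σ • w t σ) ∈ L t) ∧
      -- ... together with the vanishing of the corner-locus multiplicities of `φ`
       (∀ t : T,
          ∑ σ ∈ adj t, (wt σ : ℝ) * u σ (w t σ) =
            uτ t (∑ σ ∈ adj t, wt σ • w t σ))) := by
  simp only [Finset.sum_zsmul_mk, Submodule.mk_mem_map_id_prod_iff, eq_comm (a := uτ _ _)]
  exact forall_and

/-- Local combinatorial model of a weighted rational polyhedral complex `Π`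
of dimension `d` in `ℝ^m` together with a function `φ` that is affine on each face:
* `T` indexes the `(d-1)`-dimensional faces `τ`, `D` the `d`-dimensional faces `σ`;
* `adj t` is the set of `d`-faces containing the `(d-1)`-face `t`;
* `wt σ` is the integer weight `m_σ`;
* `w t σ` is the primitive inward lattice generator `ω_{σ,τ}`;
* `L t` is the linear span `L_τ` of `τ`;
* `u σ` (resp. `uτ t`) is the linear part of `φ` on the face `σ` (resp. `τ`); continuity of
  `φ` across `τ` is the compatibility `u σ = uτ t` on `L t`.

The graph complex `Π′ ⊂ ℝ^m × ℝ` has faces with primitive vectors `(ω_{σ,τ}, ∂φ/∂ω_{σ,τ})`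
over the linear spans `{(v, uτ v) : v ∈ L_τ}` and the same weights.  Then `Π′` is balanced
at every `(d-1)`-face if and only if `Π` is balanced and the tropical Weil divisor
`div(φ)` vanishes. -/
theorem stmt6 (m : ℕ) (D T : Type*) [Fintype D]
    (adj : T → Finset D) (wt : D → ℤ)
    (w : T → D → (Fin m → ℝ))
    (L : T → Submodule ℝ (Fin m → ℝ))
    (u : D → ((Fin m → ℝ) →ₗ[ℝ] ℝ)) (uτ : T → ((Fin m → ℝ) →ₗ[ℝ] ℝ))
    (hcompat : ∀ t : T, ∀ σ ∈ adj t, ∀ v ∈ L t, u σ v = uτ t v) :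
    -- balancing of the graph complex `Π′` at every `(d-1)`-face
    (∀ t : T,
        (∑ σ ∈ adj t, wt σ • ((w t σ, u σ (w t σ)) : (Fin m → ℝ) × ℝ)) ∈
          (L t).map (LinearMap.prod (LinearMap.id) (uτ t))) ↔
      -- balancing of `Π` ...
      ((∀ t : T, (∑ σ ∈ adj t, wt σ • w t σ) ∈ L t) ∧
      -- ... together with the vanishing of the corner-locus multiplicities of `φ`
       (∀ t : T,
          ∑ σ ∈ adj t, (wt σ : ℝ) * u σ (w t σ) =
            uτ t (∑ σ ∈ adj t, wt σ • w t σ))) :=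
  stmt6_general m D T adj wt w L u uτ
end

section
/- Let Π be a balanced weighted rational polyhedral complex of dimension d in ℝ^m and let L : |Π| → ℝⁿ be given by L(x) = (φ₁(x),…,φ_n(x)) where each φ_i is piecewise affine with integral linear part and has vanishing tropical Weil divisor: div(φ_i) = 0. Then the graph Π′ = Γ_Π(L) ⊂ ℝ^m × ℝⁿ, with weights transported from Π via the canonical isomorphism ι : Π → Π′, is a balanced weighted rational polyhedral complex of dimension d, and L = p₂ ∘ ι where p₂ is the projection onto ℝⁿ. -/
/-!
The graph of a map whose linear part on `L_τ` is `v ↦ (v, (uτ_i v)_i)` is balanced because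
both coordinates of the weighted sum of its primitive vectors are controlled: the first is the
balancing sum of `Π`, which lies in `L_τ`, and the second is, coordinatewise, the sum that
`div(φ_i) = 0` identifies with `uτ_i` applied to that balancing sum.
-/

theorem Submodule.sum_zsmul_mk_mem_map_prod_id {ι R M N : Type*} [CommRing R]
    [AddCommGroup M] [Module R M] [AddCommGroup N] [Module R N]
    (s : Finset ι) (c : ι → ℤ) (x : ι → M) (y : ι → N) (f : M →ₗ[R] N) (P : Submodule R M)
    (hx : ∑ j ∈ s, c j • x j ∈ P) (hy : ∑ j ∈ s, c j • y j = f (∑ j ∈ s, c j • x j)) :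
    ∑ j ∈ s, c j • (x j, y j) ∈ P.map (LinearMap.id.prod f) :=
  ⟨_, hx, by simp [Prod.ext_iff, Prod.fst_sum, Prod.snd_sum, hy]⟩

theorem LinearMap.sum_zsmul_eq_pi_apply_sum {ι κ R M : Type*} [CommRing R] [AddCommGroup M]
    [Module R M] (s : Finset ι) (c : ι → ℤ) (x : ι → M) (g : κ → ι → M →ₗ[R] R)
    (f : κ → M →ₗ[R] R)
    (h : ∀ k, ∑ j ∈ s, (c j : R) * g k j (x j) = f k (∑ j ∈ s, c j • x j)) :
    ∑ j ∈ s, c j • (fun k => g k j (x j)) = LinearMap.pi f (∑ j ∈ s, c j • x j) := by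
  funext k
  simp [Finset.sum_apply, ← h k, zsmul_eq_mul]

theorem stmt8_general (m nn : ℕ) (D T : Type*)
    (adj : T → Finset D) (wt : D → ℤ)
    (w : T → D → (Fin m → ℝ))
    (L : T → Submodule ℝ (Fin m → ℝ))
    (u : Fin nn → D → ((Fin m → ℝ) →ₗ[ℝ] ℝ))
    (uτ : Fin nn → T → ((Fin m → ℝ) →ₗ[ℝ] ℝ))
    (hbal : ∀ t : T, (∑ σ ∈ adj t, wt σ • w t σ) ∈ L t)
    (hdiv : ∀ i : Fin nn, ∀ t : T,
      ∑ σ ∈ adj t, (wt σ : ℝ) * u i σ (w t σ) = uτ i t (∑ σ ∈ adj t, wt σ • w t σ))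
    (Lfun : (Fin m → ℝ) → (Fin nn → ℝ)) :
    -- the graph complex `Γ_Π(L)` is balanced at every `(d-1)`-face ...
    (∀ t : T,
        (∑ σ ∈ adj t,
            wt σ • ((w t σ, fun i => u i σ (w t σ)) : (Fin m → ℝ) × (Fin nn → ℝ))) ∈
          (L t).map (LinearMap.prod (LinearMap.id)
            (LinearMap.pi (fun i : Fin nn => uτ i t)))) ∧
      -- ... and `L = p₂ ∘ ι` for `ι : x ↦ (x, L x)`
      (∀ x : Fin m → ℝ, Prod.snd ((x, Lfun x) : (Fin m → ℝ) × (Fin nn → ℝ)) = Lfun x) :=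
  ⟨fun t => Submodule.sum_zsmul_mk_mem_map_prod_id _ _ _ _ _ _ (hbal t)
      (LinearMap.sum_zsmul_eq_pi_apply_sum _ _ _ _ _ fun i => hdiv i t),
    fun _ => rfl⟩

/-- Local combinatorial model as in the previous statements: `T` indexes the
`(d-1)`-faces and `D` the `d`-faces of a balanced weighted rational polyhedral complex `Π`
in `ℝ^m`; `u i`/`uτ i` encode the linear parts of the piecewise affine coordinate functions
`φ_i` (`i = 1, …, n`) of the map `L = (φ₁, …, φ_n) : |Π| → ℝⁿ`, each of which has vanishing
tropical Weil divisor.  Then the graph complex `Π′ = Γ_Π(L) ⊂ ℝ^m × ℝⁿ`, with primitive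
vectors `(ω_{σ,τ}, (∂φ_i/∂ω_{σ,τ})_i)`, linear spans `{(v, (uτ_i v)_i) : v ∈ L_τ}`, and the
weights transported from `Π` via the canonical isomorphism `ι : x ↦ (x, L x)`, is balanced
(of dimension `d`); moreover `L = p₂ ∘ ι` for the second projection `p₂`. -/
theorem stmt8 (m nn : ℕ) (D T : Type*) [Fintype D]
    (adj : T → Finset D) (wt : D → ℤ)
    (w : T → D → (Fin m → ℝ))
    (L : T → Submodule ℝ (Fin m → ℝ))
    (u : Fin nn → D → ((Fin m → ℝ) →ₗ[ℝ] ℝ))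
    (uτ : Fin nn → T → ((Fin m → ℝ) →ₗ[ℝ] ℝ))
    (hcompat : ∀ i : Fin nn, ∀ t : T, ∀ σ ∈ adj t, ∀ v ∈ L t, u i σ v = uτ i t v)
    (hbal : ∀ t : T, (∑ σ ∈ adj t, wt σ • w t σ) ∈ L t)
    (hdiv : ∀ i : Fin nn, ∀ t : T,
      ∑ σ ∈ adj t, (wt σ : ℝ) * u i σ (w t σ) = uτ i t (∑ σ ∈ adj t, wt σ • w t σ))
    (Lfun : (Fin m → ℝ) → (Fin nn → ℝ)) :
    -- the graph complex `Γ_Π(L)` is balanced at every `(d-1)`-face ...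
    (∀ t : T,
        (∑ σ ∈ adj t,
            wt σ • ((w t σ, fun i => u i σ (w t σ)) : (Fin m → ℝ) × (Fin nn → ℝ))) ∈
          (L t).map (LinearMap.prod (LinearMap.id)
            (LinearMap.pi (fun i : Fin nn => uτ i t)))) ∧
      -- ... and `L = p₂ ∘ ι` for `ι : x ↦ (x, L x)`
      (∀ x : Fin m → ℝ, Prod.snd ((x, Lfun x) : (Fin m → ℝ) × (Fin nn → ℝ)) = Lfun x) :=
  stmt8_general m nn D T adj wt w L u uτ hbal hdiv Lfun
end

section
/- Let Γ ⊆ ℝ be a dense additive subgroup containing nonzero elements, and let σ ⊂ ℝⁿ be a polytope cut out by finitely many inequalities with rational linear parts (a ℤ-polytope). Then for any point ω₀ ∈ σ, the set (ω₀ + ℚⁿ) ∩ σ is dense in σ. -/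
/-!
A point `x` of the polyhedron is the limit of `ω₀ + t • (x - ω₀)` as `t → 1⁻`. At such a point
every constraint is either strict or constant along `x - ω₀`; the constant ones cut out
`ω₀ + ker A'` for a rational matrix `A'`, and the strict ones an open set, so it suffices that
rational vectors are dense in `ker A'`. They are because `1 - B * A'`, for a rational `B` with
`A' * B * A' = A'`, is a rational matrix fixing every real vector of `ker A'` and mapping `ℚⁿ`
into it.
-/

open Matrix Set Filter Topology

theorem LinearMap.exists_comp_comp_eq_self {K V W : Type*} [DivisionRing K] [AddCommGroup V]
    [Module K V] [AddCommGroup W] [Module K W] (f : V →ₗ[K] W) :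
    ∃ g : W →ₗ[K] V, f ∘ₗ g ∘ₗ f = f := by
  obtain ⟨s, hs⟩ := f.rangeRestrict.exists_rightInverse_of_surjective f.range_rangeRestrict
  obtain ⟨r, hr⟩ := f.range.subtype.exists_leftInverse_of_injective f.range.ker_subtype
  refine ⟨s ∘ₗ r, ?_⟩
  calc f ∘ₗ (s ∘ₗ r) ∘ₗ f
      = f.range.subtype ∘ₗ (f.rangeRestrict ∘ₗ s) ∘ₗ (r ∘ₗ f.range.subtype) ∘ₗ f.rangeRestrict :=
        rfl
    _ = f := by rw [hs, hr]; rfl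

theorem Matrix.exists_mul_mul_eq_self {K m n : Type*} [Field K] [Fintype m] [DecidableEq m]
    [Fintype n] [DecidableEq n] (A : Matrix m n K) : ∃ B : Matrix n m K, A * B * A = A := by
  obtain ⟨g, hg⟩ := (Matrix.toLin' A).exists_comp_comp_eq_self
  refine ⟨LinearMap.toMatrix' g, Matrix.toLin'.injective ?_⟩
  rw [Matrix.toLin'_mul, Matrix.toLin'_mul, Matrix.toLin'_toMatrix']
  exact hg

theorem Matrix.map_ratCast_mulVec {m n : Type*} [Fintype n] (A : Matrix m n ℚ) (q : n → ℚ) :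
    A.map ((↑) : ℚ → ℝ) *ᵥ ((↑) ∘ q) = (↑) ∘ (A *ᵥ q) :=
  funext fun i ↦ (RingHom.map_mulVec (Rat.castHom ℝ) A q i).symm

theorem Matrix.mem_closure_ratCast_ker {m n : Type*} [Fintype m] [Fintype n] (A : Matrix m n ℚ)
    {w : n → ℝ} (hw : A.map ((↑) : ℚ → ℝ) *ᵥ w = 0) :
    w ∈ closure ((fun q : n → ℚ ↦ ((↑) ∘ q : n → ℝ)) '' {q | A *ᵥ q = 0}) := by
  classical
  obtain ⟨B, hB⟩ := A.exists_mul_mul_eq_self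
  set P : Matrix n n ℚ := 1 - B * A
  have hAP : A * P = 0 := by simp [P, Matrix.mul_sub, ← Matrix.mul_assoc, hB]
  have hPw : P.map ((↑) : ℚ → ℝ) *ᵥ w = w := by
    have hP : P.map ((↑) : ℚ → ℝ) = 1 - B.map ((↑) : ℚ → ℝ) * A.map ((↑) : ℚ → ℝ) := by
      ext i j
      simp [P, one_apply, mul_apply, apply_ite]
    rw [hP, sub_mulVec, one_mulVec, ← mulVec_mulVec, hw, mulVec_zero, sub_zero]
  rw [← hPw]
  refine map_mem_closure (Continuous.matrix_mulVec continuous_const continuous_id)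
    ((DenseRange.piMap fun _ ↦ Rat.denseRange_cast) w) ?_
  rintro _ ⟨q, rfl⟩
  refine ⟨P *ᵥ q, ?_, (P.map_ratCast_mulVec q).symm⟩
  rw [Set.mem_ofPred_eq, mulVec_mulVec, hAP, zero_mulVec]

def ratPolyhedron {ι n : Type*} [Fintype n] (A : Matrix ι n ℚ) (c : ι → ℝ) : Set (n → ℝ) :=
  {x | ∀ i, c i ≤ (A.map ((↑) : ℚ → ℝ) *ᵥ x) i}

def ratTranslates {n : Type*} (ω₀ : n → ℝ) : Set (n → ℝ) :=
  {y | ∃ q : n → ℚ, ∀ j, y j = ω₀ j + q j}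

section

variable {ι n : Type*} [Fintype ι] [Fintype n] {A : Matrix ι n ℚ} {c : ι → ℝ} {ω₀ : n → ℝ}

theorem isOpen_setOf_forall_lt_of_ne_zero (v : ι → ℝ) :
    IsOpen {z : n → ℝ | ∀ i, v i ≠ 0 → c i < (A.map ((↑) : ℚ → ℝ) *ᵥ z) i} := by
  simp only [Set.ofPred_forall]
  refine isOpen_iInter_of_finite fun i ↦ ?_
  by_cases hi : v i = 0
  · simp [hi]
  · simpa [hi] using isOpen_lt continuous_const
      ((continuous_apply i).comp (Continuous.matrix_mulVec continuous_const continuous_id))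

theorem mem_closure_inter_ratTranslates_of_forall_eq_zero_or_lt (hω₀ : ω₀ ∈ ratPolyhedron A c)
    {y : n → ℝ}
    (hy : ∀ i, (A.map ((↑) : ℚ → ℝ) *ᵥ (y - ω₀)) i = 0 ∨ c i < (A.map ((↑) : ℚ → ℝ) *ᵥ y) i) :
    y ∈ closure (ratPolyhedron A c ∩ ratTranslates ω₀) := by
  classical
  set v := A.map ((↑) : ℚ → ℝ) *ᵥ (y - ω₀)
  let I := {i // v i = 0}
  set U := {z : n → ℝ | ∀ i, v i ≠ 0 → c i < (A.map ((↑) : ℚ → ℝ) *ᵥ z) i}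
  set T := (fun q : n → ℚ ↦ ω₀ + (↑) ∘ q) '' {q | A.submatrix (Subtype.val : I → ι) id *ᵥ q = 0}
  have hyT : y ∈ closure T := by
    have hker := (A.submatrix (Subtype.val : I → ι) id).mem_closure_ratCast_ker
      (w := y - ω₀) (funext fun i ↦ i.2)
    have := map_mem_closure (continuous_const.add continuous_id (f := fun _ ↦ ω₀)) hker
      (t := T) (by rintro _ ⟨q, hq, rfl⟩; exact ⟨q, hq, rfl⟩)
    simpa using this
  have hyU : y ∈ U := fun i hi ↦ (hy i).resolve_left hi
  have hUT : U ∩ T ⊆ ratPolyhedron A c ∩ ratTranslates ω₀ := by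
    rintro _ ⟨hU, q, hq, rfl⟩
    refine ⟨fun i ↦ ?_, q, fun j ↦ rfl⟩
    by_cases hi : v i = 0
    · have hqi : (A *ᵥ q) i = 0 := congrFun hq ⟨i, hi⟩
      simpa [mulVec_add, map_ratCast_mulVec, hqi] using hω₀ i
    · exact (hU i hi).le
  exact closure_mono hUT ((isOpen_setOf_forall_lt_of_ne_zero v).inter_closure ⟨hyU, hyT⟩)

theorem ratPolyhedron_subset_closure_inter_ratTranslates (hω₀ : ω₀ ∈ ratPolyhedron A c) :
    ratPolyhedron A c ⊆ closure (ratPolyhedron A c ∩ ratTranslates ω₀) := by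
  intro x hx
  set M := A.map ((↑) : ℚ → ℝ)
  let p : ℝ → n → ℝ := fun t ↦ ω₀ + t • (x - ω₀)
  have hp : Tendsto p (𝓝[<] 1) (𝓝 x) := by
    have : Continuous p := by fun_prop
    simpa [p] using (this.tendsto 1).mono_left nhdsWithin_le_nhds
  rw [← closure_closure]
  refine mem_closure_of_tendsto hp ?_
  filter_upwards [Ioo_mem_nhdsLT zero_lt_one] with t ⟨ht₀, ht₁⟩
  refine mem_closure_inter_ratTranslates_of_forall_eq_zero_or_lt hω₀ fun i ↦ ?_
  have hlin : (M *ᵥ p t) i - c i = (1 - t) * ((M *ᵥ ω₀) i - c i) + t * ((M *ᵥ x) i - c i) := by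
    simp only [p, mulVec_add, mulVec_smul, mulVec_sub]
    simp only [Pi.add_apply, Pi.smul_apply, Pi.sub_apply, smul_eq_mul]
    ring
  have hdir : (M *ᵥ (p t - ω₀)) i = t * ((M *ᵥ x) i - (M *ᵥ ω₀) i) := by
    simp [p, mulVec_smul, mulVec_sub]
  have h₀ := hω₀ i
  have h₁ := hx i
  rcases eq_or_ne ((M *ᵥ x) i) ((M *ᵥ ω₀) i) with h | h
  · left
    rw [hdir, h, sub_self, mul_zero]
  · right
    rcases h.lt_or_gt with h | h <;> nlinarith

end

theorem stmt17_general (n k : ℕ) (u : Fin k → Fin n → ℤ) (c : Fin k → ℝ)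
    (σ : Set (Fin n → ℝ))
    (hσ : σ = {x | ∀ i : Fin k, c i ≤ ∑ j : Fin n, (u i j : ℝ) * x j})
    (ω₀ : Fin n → ℝ) (hω₀ : ω₀ ∈ σ) :
    σ ⊆ closure {y | y ∈ σ ∧ ∃ q : Fin n → ℚ, ∀ j : Fin n, y j = ω₀ j + (q j : ℝ)} := by
  have hσA : σ = ratPolyhedron (Matrix.of fun i j ↦ (u i j : ℚ)) c := by
    simp [hσ, ratPolyhedron, mulVec, dotProduct]
  subst hσA
  exact ratPolyhedron_subset_closure_inter_ratTranslates hω₀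

/-- Let `Γ ⊆ ℝ` be a dense additive subgroup containing a nonzero
element, and let `σ ⊂ ℝⁿ` be a `ℤ`-polytope, i.e. a bounded set of the form
`{x | ∀ i, c i ≤ ⟨u i, x⟩}` with `u i ∈ ℤⁿ` and `c i ∈ ℝ`.  Then for any `ω₀ ∈ σ` the set
`(ω₀ + ℚⁿ) ∩ σ` is dense in `σ`. -/
theorem stmt17 (Γ : AddSubgroup ℝ) (hΓdense : Dense (Γ : Set ℝ))
    (hΓne : ∃ γ ∈ Γ, γ ≠ 0)
    (n k : ℕ) (u : Fin k → Fin n → ℤ) (c : Fin k → ℝ)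
    (σ : Set (Fin n → ℝ))
    (hσ : σ = {x | ∀ i : Fin k, c i ≤ ∑ j : Fin n, (u i j : ℝ) * x j})
    (hbdd : Bornology.IsBounded σ)
    (ω₀ : Fin n → ℝ) (hω₀ : ω₀ ∈ σ) :
    σ ⊆ closure {y | y ∈ σ ∧ ∃ q : Fin n → ℚ, ∀ j : Fin n, y j = ω₀ j + (q j : ℝ)} :=
  stmt17_general n k u c σ hσ ω₀ hω₀
end

section
/- Let E and F be graded fields over a graded field k (commutative graded rings in which every nonzero homogeneous element is invertible), and suppose A is a graded k-algebra that is an integral domain and is finite-dimensional as a module over a graded subfield E′ ⊆ A which is a graded field. Then A is itself a graded field. -/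
/-!
Since `A` is finite over `E'`, a nonzero homogeneous `a` of degree `d` satisfies a monic relation
`∑ cⱼ aʲ = 0` with `cⱼ ∈ E'`. Taking the component of degree `n • d` (`n` the degree of the relation)
gives a relation of the same shape whose coefficients `cⱼ` are homogeneous of degree `(n - j) • d`,
still lie in `E'` (which is a graded subring) and hence are zero or units. In such a relation one
can cancel powers of `a` using that `A` has no homogeneous zero divisors, until the constant
coefficient is a unit; it is then a multiple of `a`, so `a` is a unit.
-/

open DirectSum Finset

section GradedPowerRelation

variable {ι A σ : Type*} [AddCommGroup ι] [DecidableEq ι] [SetLike σ A]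

section Semiring

variable [Semiring A] [AddSubmonoidClass σ A] (𝒜 : ι → σ) [GradedRing 𝒜]

theorem coe_decompose_sum_mul_pow {a : A} {d : ι} (ha : a ∈ 𝒜 d) (s : Finset ℕ) (c : ℕ → A)
    (e : ι) :
    (decompose 𝒜 (∑ j ∈ s, c j * a ^ j) e : A) =
      ∑ j ∈ s, (decompose 𝒜 (c j) (e - j • d) : A) * a ^ j := by
  rw [decompose_sum, DFinsupp.finsetSum_apply, AddSubmonoidClass.coe_finsetSum]
  refine sum_congr rfl fun j _ => ?_
  conv_lhs => rw [show e = e - j • d + j • d by abel]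
  exact coe_decompose_mul_add_of_right_mem 𝒜 (SetLike.pow_mem_graded j ha)

theorem sum_mul_pow_mem_graded {a : A} {d e : ι} (ha : a ∈ 𝒜 d) (s : Finset ℕ) {c : ℕ → A}
    (hc : ∀ j, c j ∈ 𝒜 (e - j • d)) : ∑ j ∈ s, c j * a ^ j ∈ 𝒜 e := by
  refine sum_mem fun j _ => ?_
  have h := SetLike.mul_mem_graded (hc j) (SetLike.pow_mem_graded j ha)
  rwa [sub_add_cancel] at h

end Semiring

theorem isUnit_of_sum_mul_pow_eq_zero [CommRing A] [AddSubmonoidClass σ A] (𝒜 : ι → σ)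
    [GradedRing 𝒜]
    (hdom : ∀ a b : A, SetLike.IsHomogeneousElem 𝒜 a → SetLike.IsHomogeneousElem 𝒜 b →
      a * b = 0 → a = 0 ∨ b = 0)
    {a : A} {d : ι} (ha : a ∈ 𝒜 d) (ha0 : a ≠ 0) (n : ℕ) :
    ∀ (c : ℕ → A) (e : ι), (∀ j, c j ∈ 𝒜 (e - j • d)) → (∀ j, c j ≠ 0 → IsUnit (c j)) →
      c n ≠ 0 → ∑ j ∈ range (n + 1), c j * a ^ j = 0 → IsUnit a := by
  induction n with
  | zero =>
    intro c e _ _ hcn hsum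
    simp_all
  | succ n ih =>
    intro c e hdeg hunit hcn hsum
    have hfactor : ∑ j ∈ range (n + 1), c (j + 1) * a ^ (j + 1) =
        a * ∑ j ∈ range (n + 1), c (j + 1) * a ^ j := by
      rw [mul_sum]
      exact sum_congr rfl fun j _ => by ring
    rw [sum_range_succ', pow_zero, mul_one, hfactor] at hsum
    by_cases hc0 : c 0 = 0
    · have hdeg' : ∀ j, c (j + 1) ∈ 𝒜 (e - d - j • d) := fun j => by
        rw [sub_sub, ← succ_nsmul']
        exact hdeg (j + 1)
      rw [hc0, add_zero] at hsum
      rcases hdom _ _ ⟨d, ha⟩ ⟨_, sum_mul_pow_mem_graded 𝒜 ha _ hdeg'⟩ hsum with h | h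
      · exact absurd h ha0
      · exact ih (fun j => c (j + 1)) (e - d) hdeg' (fun j => hunit (j + 1)) hcn h
    · refine isUnit_of_mul_isUnit_left (y := -∑ j ∈ range (n + 1), c (j + 1) * a ^ j) ?_
      rw [mul_neg, ← eq_neg_of_add_eq_zero_right hsum]
      exact hunit 0 hc0

end GradedPowerRelation

/-- Graded analogue of "a domain finite over a field is a field".  Let `A`
be a commutative ring graded by an abelian group `ι` (e.g. `ι = ℝ`), which is a graded
`k`-algebra and an integral domain in the graded sense (no zero divisors among homogeneous
elements).  Suppose `A` contains a graded (i.e. homogeneous) subring `E′` which is a graded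
field — every nonzero homogeneous element of `E′` is invertible in `E′` — and that `A` is a
finite `E′`-module.  Then `A` is itself a graded field: every nonzero homogeneous element
of `A` is a unit. -/
theorem stmt19 (ι : Type*) [AddCommGroup ι] [DecidableEq ι]
    (k A : Type*) [CommRing k] [CommRing A] [Algebra k A]
    (𝒜 : ι → AddSubgroup A) [GradedRing 𝒜]
    (hdom : ∀ a b : A, SetLike.IsHomogeneousElem 𝒜 a → SetLike.IsHomogeneousElem 𝒜 b →
      a * b = 0 → a = 0 ∨ b = 0)
    (E' : Subalgebra k A)
    (hE'hom : ∀ a ∈ E', ∀ i : ι, ((DirectSum.decompose 𝒜 a i : 𝒜 i) : A) ∈ E')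
    (hE'field : ∀ a ∈ E', SetLike.IsHomogeneousElem 𝒜 a → a ≠ 0 → ∃ b ∈ E', a * b = 1)
    [Module.Finite E' A] :
    ∀ a : A, SetLike.IsHomogeneousElem 𝒜 a → a ≠ 0 → IsUnit a := by
  rintro a ⟨d, ha⟩ ha0
  have : Nontrivial A := nontrivial_of_ne a 0 ha0
  obtain ⟨p, hmonic, hp⟩ := (Algebra.IsIntegral.of_finite E' A).isIntegral a
  rw [Polynomial.eval₂_eq_sum_range] at hp
  set n := p.natDegree
  refine isUnit_of_sum_mul_pow_eq_zero 𝒜 hdom ha ha0 n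
    (fun j => decompose 𝒜 (algebraMap E' A (p.coeff j)) (n • d - j • d)) (n • d)
    (fun j => SetLike.coe_mem _) (fun j hj => ?_) ?_ ?_
  · obtain ⟨b, -, hb⟩ := hE'field _ (hE'hom _ (p.coeff j).2 _) ⟨_, SetLike.coe_mem _⟩ hj
    exact IsUnit.of_mul_eq_one b hb
  · rw [hmonic.coeff_natDegree, map_one, sub_self,
      decompose_of_mem_same 𝒜 (SetLike.one_mem_graded 𝒜)]
    exact one_ne_zero
  · rw [← coe_decompose_sum_mul_pow 𝒜 ha, hp, decompose_zero, DirectSum.zero_apply,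
      ZeroMemClass.coe_zero]
end
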